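/- Fix d ≥ 1 and λ ∈ W^d. Consider the multivariate formal power series F̄(x₁,…,x_d) = a_λ(x) · Σ_{k≥0} (x₁ + x₂ + ⋯ + x_d)^k over ℚ, where a_λ(x) = det( x_i^{λ_j} )_{1≤i,j≤d}. Then for every μ ∈ ℤ^d with μ₁ ≥ μ₂ ≥ ⋯ ≥ μ_d ≥ 0 (the closure of W^d), the coefficient of x₁^{μ₁}⋯x_d^{μ_d} in F̄ equals f(λ;μ), the number of lattice walks from λ to μ with positive unit coordinate vector steps staying in W^d. -/

import Mathlib

open scoped BigOperators

/-- The `d`-dimensional Weyl chamber `W^d = {x ∈ ℤ^d : x₁ > x₂ > ⋯ > x_d > 0}`. -/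
def WeylChamber (d : ℕ) : Set (Fin d → ℤ) :=
  {x | (∀ i j : Fin d, i < j → x j < x i) ∧ ∀ i, 0 < x i}

/-- `q` is obtained from `p` by adding a positive unit coordinate vector. -/
def IsPosStep {d : ℕ} (p q : Fin d → ℤ) : Prop :=
  ∃ i : Fin d, q = p + Pi.single i 1

/-- A walk of length `n` starting at `lam`, staying in the Weyl chamber `W^d`, all of
whose steps are positive unit coordinate vectors. -/
def IsPosWalk (d n : ℕ) (lam : Fin d → ℤ) (p : Fin (n + 1) → (Fin d → ℤ)) : Prop :=
  p 0 = lam ∧ (∀ k, p k ∈ WeylChamber d) ∧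
    ∀ k : Fin n, IsPosStep (p k.castSucc) (p k.succ)

/-- `f(λ;μ)`: the number of lattice walks from `lam` to `mu`, staying in the Weyl
chamber `W^d`, all of whose steps are positive unit coordinate vectors.  (Any such
walk has length `|μ| - |λ|`.) -/
noncomputable def posWalkCount (d : ℕ) (lam mu : Fin d → ℤ) : ℕ :=
  Nat.card {p : Fin (((∑ i, mu i) - ∑ i, lam i).toNat + 1) → (Fin d → ℤ) //
    IsPosWalk d ((∑ i, mu i) - ∑ i, lam i).toNat lam p ∧
      p (Fin.last ((∑ i, mu i) - ∑ i, lam i).toNat) = mu}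

/-! Since `(1 - ∑ xᵢ) G = 1`, the coefficients `c ν` of `F = a_λ G` satisfy
`c ν = [x^ν] a_λ + ∑ᵢ c (ν - eᵢ)`, and for weakly decreasing `ν` the only monomial of `a_λ`
that can contribute is `x^λ`. Inside the chamber this is the recursion `f(λ;μ) = [μ = λ] +
∑ᵢ f(λ;μ - eᵢ)` obtained by removing the last step of a walk, so it remains to see that `c`
vanishes on the boundary of the chamber. It does: `F` is antisymmetric under permutations of
the variables (`a_λ` is an alternant and `G`, the inverse of a symmetric series, is symmetric),
so `c ν = 0` when two coordinates of `ν` agree; and `x₁ ⋯ x_d` divides `a_λ` since `λ > 0`,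
so `c ν = 0` when a coordinate of `ν` vanishes. -/

open MvPowerSeries Equiv

namespace MvPowerSeries

variable {ι R : Type*} [CommRing R]

lemma coeff_eq_zero_of_rename_swap_eq_neg [DecidableEq ι] [NoZeroDivisors R] [CharZero R]
    {F : MvPowerSeries ι R} {i j : ι} (hF : rename (swap i j) F = -F) {ν : ι →₀ ℕ}
    (hν : ν i = ν j) : coeff ν F = 0 := by
  have hswap : Finsupp.embDomain (swap i j).toEmbedding ν = ν := by
    ext k
    have h := Finsupp.embDomain_apply_self (swap i j).toEmbedding ν (swap i j k)
    rw [Equiv.coe_toEmbedding, swap_apply_self] at h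
    rw [h, swap_apply_def]
    split_ifs <;> simp_all
  have h : coeff ν (rename (swap i j) F) = coeff ν F := by
    simpa [hswap] using coeff_embDomain_rename (R := R) (swap i j).toEmbedding F ν
  rw [hF, map_neg] at h
  exact CharZero.neg_eq_self_iff.1 h

section Fintype

variable [Fintype ι]

lemma coeff_mul_of_one_sub_sum_X_mul_eq_one {G : MvPowerSeries ι R}
    (hG : (1 - ∑ i, X i) * G = 1) (A : MvPowerSeries ι R) (ν : ι →₀ ℕ) :
    coeff ν (A * G) = coeff ν A + ∑ i,
      if Finsupp.single i 1 ≤ ν then coeff (ν - Finsupp.single i 1) (A * G) else 0 := by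
  have hAG : A * G = A + ∑ i, X i * (A * G) := by
    rw [← Finset.sum_mul]
    linear_combination A * hG
  conv_lhs => rw [hAG]
  simp only [map_add, map_sum, X_def, coeff_monomial_mul, one_mul]

lemma rename_eq_self_of_one_sub_sum_X_mul_eq_one {G : MvPowerSeries ι R}
    (hG : (1 - ∑ i, X i) * G = 1) (σ : Perm ι) : rename σ G = G := by
  have h := congrArg (rename σ) hG
  simp only [map_mul, map_sub, map_one, map_sum, rename_X, Equiv.sum_comp] at h
  exact (left_inv_eq_right_inv (by rw [mul_comm, hG]) h).symm

variable [DecidableEq ι]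

noncomputable def alternant (e : ι → ℕ) : MvPowerSeries ι R :=
  (Matrix.of fun i j => (X i : MvPowerSeries ι R) ^ e j).det

lemma coeff_alternant (e : ι → ℕ) (ν : ι →₀ ℕ) :
    coeff ν (alternant e : MvPowerSeries ι R) =
      ∑ σ : Perm ι, if ∀ i, ν (σ i) = e i then (Perm.sign σ : R) else 0 := by
  rw [alternant, Matrix.det_apply, map_sum]
  refine Finset.sum_congr rfl fun σ _ => ?_
  have hmon : ∀ m : ι →₀ ℕ, ν = m ↔ ∀ i, ν (σ i) = m (σ i) :=
    fun m => ⟨fun h i => by rw [h], fun h => Finsupp.ext (σ.surjective.forall.2 h)⟩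
  have hsum : ∀ i, (∑ k, Finsupp.single (σ k) (e k)) (σ i) = e i := fun i => by
    simp [Finsupp.finsetSum_apply, Finsupp.single_apply, σ.injective.eq_iff]
  simp only [Matrix.of_apply, X_pow_eq, prod_monomial, Finset.prod_const_one, Units.smul_def,
    map_zsmul, coeff_monomial, hmon, hsum]
  split_ifs <;> simp

lemma X_dvd_alternant {e : ι → ℕ} (he : ∀ i, 0 < e i) (k : ι) :
    (X k : MvPowerSeries ι R) ∣ alternant e := by
  refine X_dvd_iff.2 fun ν hk => ?_
  rw [coeff_alternant]
  refine Finset.sum_eq_zero fun σ _ => if_neg fun h => (he (σ.symm k)).ne' ?_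
  rw [← h, apply_symm_apply, hk]

lemma coeff_alternant_of_antitone [LinearOrder ι] {e : ι → ℕ} (he : StrictAnti e)
    {ν : ι →₀ ℕ} (hν : Antitone ν) :
    coeff ν (alternant e : MvPowerSeries ι R) = if ⇑ν = e then 1 else 0 := by
  rw [coeff_alternant, Finset.sum_eq_single 1 _ (by simp)]
  · simp [funext_iff]
  · intro σ _ hσ
    refine if_neg fun h => hσ ?_
    have hmono : StrictMono σ := fun a b hab =>
      lt_of_not_ge fun hba => (he hab).not_ge (h a ▸ h b ▸ hν hba)
    exact Equiv.ext fun a => hmono.apply_eq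

lemma rename_alternant (σ : Perm ι) (e : ι → ℕ) :
    rename σ (alternant e : MvPowerSeries ι R) =
      ((Perm.sign σ : ℤ) : MvPowerSeries ι R) * alternant e := by
  rw [alternant, AlgHom.map_det, ← Matrix.det_permute]
  congr 1
  ext i j
  simp [rename_X]

lemma rename_swap_alternant_mul_eq_neg {G : MvPowerSeries ι R} (hG : (1 - ∑ i, X i) * G = 1)
    (e : ι → ℕ) {i j : ι} (hij : i ≠ j) :
    rename (swap i j) (alternant e * G) = -(alternant e * G) := by
  rw [map_mul, rename_alternant, rename_eq_self_of_one_sub_sum_X_mul_eq_one hG,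
    Perm.sign_swap hij]
  simp

end Fintype

end MvPowerSeries

section Walks

variable {d : ℕ}

abbrev PosWalks (d n : ℕ) (lam mu : Fin d → ℤ) : Type :=
  {p : Fin (n + 1) → Fin d → ℤ // IsPosWalk d n lam p ∧ p (Fin.last n) = mu}

lemma posWalkCount_eq_card {lam mu : Fin d → ℤ} {n : ℕ}
    (h : ((∑ i, mu i) - ∑ i, lam i).toNat = n) :
    posWalkCount d lam mu = Nat.card (PosWalks d n lam mu) := by
  subst h; rfl

lemma isEmpty_posWalks_of_notMem {n : ℕ} {lam mu : Fin d → ℤ} (hmu : mu ∉ WeylChamber d) :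
    IsEmpty (PosWalks d n lam mu) :=
  ⟨fun p => hmu (p.2.2 ▸ p.2.1.2.1 _)⟩

lemma isEmpty_posWalks_zero_of_ne {lam mu : Fin d → ℤ} (h : mu ≠ lam) :
    IsEmpty (PosWalks d 0 lam mu) :=
  ⟨fun p => h (p.2.2.symm.trans p.2.1.1)⟩

lemma card_posWalks_zero {lam mu : Fin d → ℤ} (hmu : mu ∈ WeylChamber d) :
    Nat.card (PosWalks d 0 lam mu) = if mu = lam then 1 else 0 := by
  split_ifs with h
  · subst h
    have : Unique (PosWalks d 0 mu mu) :=
      { default := ⟨fun _ => mu, ⟨rfl, fun _ => hmu, fun k => k.elim0⟩, rfl⟩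
        uniq := fun p => Subtype.ext <| funext fun k => by
          rw [Fin.fin_one_eq_zero k, p.2.1.1] }
    exact Nat.card_unique
  · have := isEmpty_posWalks_zero_of_ne h
    exact Nat.card_of_isEmpty

def PosWalks.snoc {n : ℕ} {lam mu : Fin d → ℤ} (hmu : mu ∈ WeylChamber d)
    (p : Σ i : Fin d, PosWalks d n lam (mu - Pi.single i 1)) : PosWalks d (n + 1) lam mu := by
  refine ⟨Fin.snoc p.2.1 mu, ⟨?_, fun k => ?_, fun k => ?_⟩, Fin.snoc_last _ _⟩
  · exact (Fin.snoc_castSucc (α := fun _ => Fin d → ℤ) _ _ 0).trans p.2.2.1.1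
  · induction k using Fin.lastCases with
    | last => rw [Fin.snoc_last]; exact hmu
    | cast j => rw [Fin.snoc_castSucc]; exact p.2.2.1.2.1 j
  · induction k using Fin.lastCases with
    | last =>
      rw [Fin.succ_last, Fin.snoc_last, Fin.snoc_castSucc, p.2.2.2]
      exact ⟨p.1, (sub_add_cancel mu _).symm⟩
    | cast j =>
      rw [Fin.succ_castSucc, Fin.snoc_castSucc, Fin.snoc_castSucc]
      exact p.2.2.1.2.2 j

lemma PosWalks.snoc_bijective {n : ℕ} {lam mu : Fin d → ℤ} (hmu : mu ∈ WeylChamber d) :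
    Function.Bijective (PosWalks.snoc (n := n) (lam := lam) hmu) := by
  constructor
  · rintro ⟨i, p⟩ ⟨i', p'⟩ h
    have hp : p.1 = p'.1 := funext fun k => by
      simpa [PosWalks.snoc] using congrFun (congrArg Subtype.val h) k.castSucc
    obtain rfl : i = i' := by
      have h1 : mu - Pi.single i 1 = mu - Pi.single i' 1 := by rw [← p.2.2, ← p'.2.2, hp]
      by_contra hne
      simpa [hne] using congrFun (sub_right_injective h1) i
    exact congrArg (Sigma.mk i) (Subtype.ext hp)
  · intro p
    obtain ⟨i, hi⟩ := p.2.1.2.2 (Fin.last n)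
    rw [Fin.succ_last, p.2.2] at hi
    refine ⟨⟨i, ⟨fun k => p.1 k.castSucc, ⟨p.2.1.1, fun k => p.2.1.2.1 _, fun k => ?_⟩,
      eq_sub_of_add_eq hi.symm⟩⟩, Subtype.ext <| funext fun k => ?_⟩
    · show IsPosStep (p.1 k.castSucc.castSucc) (p.1 k.succ.castSucc)
      rw [← Fin.succ_castSucc]
      exact p.2.1.2.2 k.castSucc
    · induction k using Fin.lastCases with
      | last => exact (Fin.snoc_last (α := fun _ => Fin d → ℤ) _ _).trans p.2.2.symm
      | cast j => exact Fin.snoc_castSucc (α := fun _ => Fin d → ℤ) _ _ _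

instance PosWalks.finite (n : ℕ) (lam mu : Fin d → ℤ) : Finite (PosWalks d n lam mu) := by
  induction n generalizing mu with
  | zero =>
    refine @Finite.of_subsingleton _ ⟨fun p q => Subtype.ext <| funext fun k => ?_⟩
    rw [Fin.fin_one_eq_zero k, p.2.1.1, q.2.1.1]
  | succ n ih =>
    by_cases hmu : mu ∈ WeylChamber d
    · exact Finite.of_surjective _ (PosWalks.snoc_bijective hmu).2
    · have := isEmpty_posWalks_of_notMem (n := n + 1) (lam := lam) hmu
      infer_instance

lemma card_posWalks_succ {n : ℕ} {lam mu : Fin d → ℤ} (hmu : mu ∈ WeylChamber d) :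
    Nat.card (PosWalks d (n + 1) lam mu) =
      ∑ i, Nat.card (PosWalks d n lam (mu - Pi.single i 1)) := by
  rw [← Nat.card_eq_of_bijective _ (PosWalks.snoc_bijective hmu), Nat.card_sigma]

lemma posWalkCount_eq_zero_of_notMem {lam mu : Fin d → ℤ} (hmu : mu ∉ WeylChamber d) :
    posWalkCount d lam mu = 0 := by
  have := isEmpty_posWalks_of_notMem (n := ((∑ i, mu i) - ∑ i, lam i).toNat) (lam := lam) hmu
  exact (posWalkCount_eq_card rfl).trans Nat.card_of_isEmpty

lemma posWalkCount_eq_ite_add_sum {lam mu : Fin d → ℤ} (hmu : mu ∈ WeylChamber d) :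
    posWalkCount d lam mu =
      (if mu = lam then 1 else 0) + ∑ i, posWalkCount d lam (mu - Pi.single i 1) := by
  have hsum (i : Fin d) : ∑ k, (mu - Pi.single i 1 : Fin d → ℤ) k = ∑ k, mu k - 1 := by
    simp [Finset.sum_sub_distrib]
  by_cases hle : ∑ k, mu k ≤ ∑ k, lam k
  · rw [posWalkCount_eq_card (n := 0) (by omega), card_posWalks_zero hmu,
      Finset.sum_eq_zero fun i _ => ?_, add_zero]
    have hne : mu - Pi.single i 1 ≠ lam := fun h => by
      have := hsum i
      rw [h] at this
      omega
    have := isEmpty_posWalks_zero_of_ne hne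
    exact (posWalkCount_eq_card (n := 0) (by rw [hsum]; omega)).trans Nat.card_of_isEmpty
  · have hne : mu ≠ lam := by rintro rfl; exact hle le_rfl
    obtain ⟨n, hn⟩ : ∃ n : ℕ, ((∑ i, mu i) - ∑ i, lam i).toNat = n + 1 :=
      ⟨_, (Nat.succ_pred_eq_of_pos (by omega)).symm⟩
    rw [if_neg hne, zero_add, posWalkCount_eq_card hn, card_posWalks_succ hmu]
    exact Finset.sum_congr rfl fun i _ =>
      (posWalkCount_eq_card (n := n) (by rw [hsum]; omega)).symm

end Walks

section WalkCoefficients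

variable {d : ℕ} {R : Type*} [CommRing R] [NoZeroDivisors R] [CharZero R] {e : Fin d → ℕ}
  {G : MvPowerSeries (Fin d) R}

lemma coeff_alternant_mul_eq_zero_of_notMem (he : ∀ i, 0 < e i)
    (hG : (1 - ∑ i, X i) * G = 1) {ν : Fin d →₀ ℕ} (hν : Antitone ν)
    (hW : (fun i => (ν i : ℤ)) ∉ WeylChamber d) : coeff ν (alternant e * G) = 0 := by
  simp only [WeylChamber, Set.mem_ofPred_eq, not_and_or, not_forall, not_lt, Nat.cast_le,
    exists_prop] at hW
  rcases hW with ⟨i, j, hij, hle⟩ | ⟨k, hk⟩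
  · exact coeff_eq_zero_of_rename_swap_eq_neg (rename_swap_alternant_mul_eq_neg hG e hij.ne)
      (le_antisymm hle (hν hij.le))
  · exact X_dvd_iff.1 ((X_dvd_alternant he k).mul_right G) ν (by omega)

theorem coeff_alternant_mul_eq_posWalkCount (he : StrictAnti e) (hpos : ∀ i, 0 < e i)
    (hG : (1 - ∑ i, X i) * G = 1) (ν : Fin d →₀ ℕ) (hν : Antitone ν) :
    coeff ν (alternant e * G) =
      (posWalkCount d (fun i => (e i : ℤ)) (fun i => (ν i : ℤ)) : R) := by
  induction ν using WellFoundedLT.induction with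
  | _ ν ih =>
  by_cases hW : (fun i => (ν i : ℤ)) ∈ WeylChamber d
  · have hν0 (i : Fin d) : 1 ≤ ν i := by have : 0 < (ν i : ℤ) := hW.2 i; omega
    have hlt (i : Fin d) : ν - Finsupp.single i 1 < ν :=
      lt_of_le_of_ne tsub_le_self fun h => by
        have := DFunLike.congr_fun h i
        simp only [Finsupp.tsub_apply, Finsupp.single_eq_same] at this
        have := hν0 i
        omega
    have hanti (i : Fin d) : Antitone ⇑(ν - Finsupp.single i 1 : Fin d →₀ ℕ) := by
      intro a b hab
      rcases hab.lt_or_eq with h | rfl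
      · have : (ν b : ℤ) < ν a := hW.1 a b h
        simp only [Finsupp.tsub_apply, Finsupp.single_apply]
        split_ifs <;> omega
      · rfl
    have hcast (i : Fin d) : (fun k => ((ν - Finsupp.single i 1 : Fin d →₀ ℕ) k : ℤ)) =
        (fun k => (ν k : ℤ)) - Pi.single i 1 := funext fun k => by
      have := hν0 i
      simp only [Finsupp.tsub_apply, Finsupp.single_apply, Pi.sub_apply, Pi.single_apply]
      split_ifs <;> subst_vars <;> omega
    rw [coeff_mul_of_one_sub_sum_X_mul_eq_one hG, coeff_alternant_of_antitone he hν,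
      posWalkCount_eq_ite_add_sum hW, Nat.cast_add, Nat.cast_sum]
    congr 1
    · simp [funext_iff]
    · refine Finset.sum_congr rfl fun i _ => ?_
      rw [if_pos (Finsupp.single_le_iff.2 (hν0 i)), ih _ (hlt i) (hanti i), hcast]
  · rw [coeff_alternant_mul_eq_zero_of_notMem hpos hG hν hW, posWalkCount_eq_zero_of_notMem hW,
      Nat.cast_zero]

end WalkCoefficients

theorem coeff_extension_eq_walkCount_general (d : ℕ) (lam : Fin d → ℤ)
    (hlam : lam ∈ WeylChamber d)
    (G : MvPowerSeries (Fin d) ℚ)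
    (hG : (1 - ∑ i : Fin d, MvPowerSeries.X i) * G = 1)
    (mu : Fin d → ℤ) (hmono : ∀ i j : Fin d, i ≤ j → mu j ≤ mu i)
    (hpos : ∀ i, 0 ≤ mu i) :
    MvPowerSeries.coeff (Finsupp.equivFunOnFinite.symm fun i => (mu i).toNat)
        (Matrix.det (Matrix.of fun i j : Fin d =>
          (MvPowerSeries.X i : MvPowerSeries (Fin d) ℚ) ^ (lam j).toNat) * G) =
      (posWalkCount d lam mu : ℚ) := by
  have he : StrictAnti fun j => (lam j).toNat := fun i j hij => by
    show (lam j).toNat < (lam i).toNat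
    have := hlam.1 i j hij
    have := hlam.2 j
    omega
  have hν : Antitone (Finsupp.equivFunOnFinite.symm fun i => (mu i).toNat) := fun i j hij => by
    have := hmono i j hij
    simp only [Finsupp.equivFunOnFinite_symm_apply_apply]
    omega
  have h := coeff_alternant_mul_eq_posWalkCount he
    (fun j => by have := hlam.2 j; omega) hG _ hν
  have hlam' : (fun j => ((lam j).toNat : ℤ)) = lam :=
    funext fun j => Int.toNat_of_nonneg (hlam.2 j).le
  have hmu' : (fun i => ((Finsupp.equivFunOnFinite.symm fun i => (mu i).toNat) i : ℤ)) = mu :=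
    funext fun i => Int.toNat_of_nonneg (hpos i)
  rwa [hlam', hmu'] at h

/-- For `λ ∈ W^d`, the series `F̄ = a_λ(x) · Σ_{k ≥ 0} (x₁ + ⋯ + x_d)^k`
(where `G = Σ_{k ≥ 0} (x₁ + ⋯ + x_d)^k` is characterised by
`(1 - (x₁ + ⋯ + x_d)) · G = 1`) has, for every `μ` in the closure of `W^d`,
coefficient of `x^μ` equal to `f(λ;μ)`. -/
theorem coeff_extension_eq_walkCount (d : ℕ) (hd : 1 ≤ d) (lam : Fin d → ℤ)
    (hlam : lam ∈ WeylChamber d)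
    (G : MvPowerSeries (Fin d) ℚ)
    (hG : (1 - ∑ i : Fin d, MvPowerSeries.X i) * G = 1)
    (mu : Fin d → ℤ) (hmono : ∀ i j : Fin d, i ≤ j → mu j ≤ mu i)
    (hpos : ∀ i, 0 ≤ mu i) :
    MvPowerSeries.coeff (Finsupp.equivFunOnFinite.symm fun i => (mu i).toNat)
        (Matrix.det (Matrix.of fun i j : Fin d =>
          (MvPowerSeries.X i : MvPowerSeries (Fin d) ℚ) ^ (lam j).toNat) * G) =
      (posWalkCount d lam mu : ℚ) :=
  coeff_extension_eq_walkCount_general d lam hlam G hG mu hmono hpos
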